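/- arXiv:2111.12387 — 2 statements merged into one kernel-verified Lean document; each statement's English description precedes it below -/
import Mathlib

section
/- Let D = (V, A) be a directed acyclic graph and B ∈ AR(D). Then B is join irreducible in AR(D) (it covers exactly one element of AR(D)) if and only if exactly one arc (u,v) ∈ B is such that the reversed arc (v,u) belongs to the transitive reduction of the reoriented graph E_B. Dually, B is meet irreducible in AR(D) if and only if exactly one arc of A ∖ B belongs to the transitive reduction of E_B. -/
def ArcRel {V : Type*} (E : Set (V × V)) : V → V → Prop := fun x y => (x, y) ∈ E

/-- `E` has no directed cycle. -/
def AcyclicArcs {V : Type*} (E : Set (V × V)) : Prop :=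
  ∀ v : V, ¬ Relation.TransGen (ArcRel E) v v

/-- `A` is the arc set of a directed acyclic graph: arcs join distinct vertices,
at most one direction between two vertices, and no directed cycle. -/
def IsDAG {V : Type*} (A : Set (V × V)) : Prop :=
  (∀ a ∈ A, a.1 ≠ a.2) ∧ (∀ a ∈ A, Prod.swap a ∉ A) ∧ AcyclicArcs A

/-- Arc set of the reorientation of `A` where exactly the arcs of `B` are reversed. -/
def reorient {V : Type*} (A B : Set (V × V)) : Set (V × V) :=
  (A \ B) ∪ (Prod.swap '' B)

/-- `B` encodes an acyclic reorientation of `A`. -/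
def ARmem {V : Type*} (A B : Set (V × V)) : Prop :=
  B ⊆ A ∧ AcyclicArcs (reorient A B)

/-- The acyclic reorientation poset of `A`, ordered by inclusion of reversed sets. -/
abbrev ARP {V : Type*} (A : Set (V × V)) := {B : Set (V × V) // ARmem A B}

/-- Transitive reduction: delete every arc whose endpoints are joined by a
directed path of length at least 2. -/
def transRed {V : Type*} (E : Set (V × V)) : Set (V × V) :=
  {a ∈ E | ¬ ∃ w : V, ArcRel E a.1 w ∧ Relation.TransGen (ArcRel E) w a.2}

/-!
Reversing a single arc `p` of an acyclic digraph `E` keeps it acyclic iff `p` lies in the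
transitive reduction of `E`: a new cycle must use the reversed arc, so it comes from a second
path along `p`. Moreover, between two acyclic reorientations `C ⊂ B` one can always reverse a
single arc of `B \ C` in `E_C` and stay acyclic, so the covering relation of `AR(D)` is that of
sets. Hence the lower covers of `B` correspond to the reversed arcs of `E_B` in its transitive
reduction, and the upper covers to the unreversed ones.
-/

open Relation Function

theorem Relation.TransGen.or_exists_reflTransGen {α : Type*} {r s : α → α → Prop} {p : α → Prop}
    {a b : α} (h : ∀ x y, r x y → s x y ∨ p x) (hab : TransGen r a b) :
    TransGen s a b ∨ ∃ x, ReflTransGen r a x ∧ p x := by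
  induction hab using TransGen.head_induction_on with
  | single hab => exact (h _ _ hab).imp TransGen.single fun hp => ⟨_, .refl, hp⟩
  | head hac _ ih =>
    rcases h _ _ hac with hs | hp
    · exact ih.imp (TransGen.head hs) fun ⟨x, hcx, hx⟩ => ⟨x, hcx.head hac, hx⟩
    · exact Or.inr ⟨_, .refl, hp⟩

section Digraphs

variable {V : Type*}

section ArcSets

variable {E F : Set (V × V)} {x y s t : V}

theorem AcyclicArcs.mono (hEF : E ⊆ F) (hF : AcyclicArcs F) : AcyclicArcs E :=
  fun v hv => hF v (TransGen.mono (fun _ _ h => hEF h) _ _ hv)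

theorem transGen_insert_or (h : TransGen (ArcRel (insert (y, x) E)) s t) :
    TransGen (ArcRel E) s t ∨ ReflTransGen (ArcRel E) s y ∧ ReflTransGen (ArcRel E) x t := by
  induction h using TransGen.head_induction_on with
  | single h =>
    rcases h with h | h
    · obtain ⟨rfl, rfl⟩ := Prod.ext_iff.1 h
      exact Or.inr ⟨.refl, .refl⟩
    · exact Or.inl (.single h)
  | head h _ ih =>
    rcases h with h | h
    · obtain ⟨rfl, rfl⟩ := Prod.ext_iff.1 h
      exact Or.inr ⟨.refl, ih.elim TransGen.to_reflTransGen And.right⟩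
    · exact ih.imp (TransGen.head h) (And.imp_left (ReflTransGen.head h))

theorem acyclicArcs_insert_iff :
    AcyclicArcs (insert (y, x) E) ↔ AcyclicArcs E ∧ ¬ ReflTransGen (ArcRel E) x y := by
  refine ⟨fun h => ⟨h.mono (Set.subset_insert _ _), fun hxy => h x ?_⟩, ?_⟩
  · exact TransGen.tail' (ReflTransGen.mono (fun _ _ h => Set.mem_insert_of_mem _ h) _ _ hxy)
      (Set.mem_insert _ _)
  · rintro ⟨hE, hxy⟩ v hv
    rcases transGen_insert_or hv with hv | ⟨hvy, hxv⟩
    · exact hE v hv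
    · exact hxy (hxv.trans hvy)

theorem AcyclicArcs.mem_transRed_iff (hE : AcyclicArcs E) (hxy : (x, y) ∈ E) :
    (x, y) ∈ transRed E ↔ ¬ ReflTransGen (ArcRel (E \ {(x, y)})) x y := by
  constructor
  · rintro ⟨-, hred⟩ hpath
    rcases hpath.cases_head with rfl | ⟨c, hxc, hcy⟩
    · exact hE x (.single hxy)
    · have hcy' : y ≠ c := by rintro rfl; exact hxc.2 rfl
      exact hred ⟨c, hxc.1, TransGen.mono (fun _ _ h => h.1) _ _
        ((reflTransGen_iff_eq_or_transGen.1 hcy).resolve_left hcy')⟩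
  · refine fun hno => ⟨hxy, fun ⟨w, hxw, hwy⟩ => ?_⟩
    have hsplit : ∀ a b, ArcRel E a b → ArcRel (E \ {(x, y)}) a b ∨ a = x := fun a b hab => by
      by_cases h : (a, b) = (x, y)
      · exact Or.inr (Prod.ext_iff.1 h).1
      · exact Or.inl ⟨hab, h⟩
    rcases hwy.or_exists_reflTransGen hsplit with hwy' | ⟨_, hwx, rfl⟩
    · have hwy'' : (x, w) ≠ (x, y) := by
        rintro h; cases h; exact hE _ hwy
      exact hno (ReflTransGen.head ⟨hxw, hwy''⟩ hwy'.to_reflTransGen)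
    · exact hE _ (TransGen.head' hxw hwx)

theorem AcyclicArcs.acyclicArcs_flip_iff (hE : AcyclicArcs E) {p : V × V} (hp : p ∈ E) :
    AcyclicArcs (insert p.swap (E \ {p})) ↔ p ∈ transRed E := by
  obtain ⟨x, y⟩ := p
  rw [hE.mem_transRed_iff hp]
  exact acyclicArcs_insert_iff.trans (and_iff_right (hE.mono Set.sdiff_subset))

end ArcSets

section Reorient

variable {A B C : Set (V × V)} {a p : V × V}

theorem mem_reorient : p ∈ reorient A B ↔ p ∈ A ∧ p ∉ B ∨ p.swap ∈ B := by
  simp [reorient, Set.mem_image, Prod.swap_eq_iff_eq_swap]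

theorem reorient_sdiff_singleton (hA : IsDAG A) (hB : B ⊆ A) (haA : a ∈ A) :
    reorient A (B \ {a}) = insert a (reorient A B \ {a.swap}) := by
  have hsw : a.swap ∉ A := hA.2.1 a haA
  have hne : a.swap ≠ a := fun h => hA.1 a haA (congrArg Prod.snd h)
  ext p
  simp only [mem_reorient, Set.mem_insert_iff, Set.mem_sdiff, Set.mem_singleton_iff,
    Prod.swap_eq_iff_eq_swap]
  grind

theorem reorient_insert (hA : IsDAG A) (hB : B ⊆ A) (haA : a ∈ A) :
    reorient A (insert a B) = insert a.swap (reorient A B \ {a}) := by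
  have hsw : a.swap ∉ A := hA.2.1 a haA
  have hne : a.swap ≠ a := fun h => hA.1 a haA (congrArg Prod.snd h)
  ext p
  simp only [mem_reorient, Set.mem_insert_iff, Set.mem_sdiff, Set.mem_singleton_iff,
    Prod.swap_eq_iff_eq_swap]
  grind

end Reorient

section AcyclicReorientations

variable {A B C : Set (V × V)} {a : V × V}

theorem ARmem.sdiff_singleton_iff (hA : IsDAG A) (hB : ARmem A B) (ha : a ∈ B) :
    ARmem A (B \ {a}) ↔ a.swap ∈ transRed (reorient A B) := by
  have hflip := hB.2.acyclicArcs_flip_iff (p := a.swap) (Or.inr ⟨a, ha, rfl⟩)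
  rw [Prod.swap_swap, ← reorient_sdiff_singleton hA hB.1 (hB.1 ha)] at hflip
  exact (and_iff_right (Set.sdiff_subset.trans hB.1)).trans hflip

theorem ARmem.insert_iff (hA : IsDAG A) (hB : ARmem A B) (haA : a ∈ A) (ha : a ∉ B) :
    ARmem A (insert a B) ↔ a ∈ transRed (reorient A B) := by
  have hflip := hB.2.acyclicArcs_flip_iff (Or.inl ⟨haA, ha⟩)
  rw [← reorient_insert hA hB.1 haA] at hflip
  exact (and_iff_right (Set.insert_subset haA hB.1)).trans hflip

theorem mem_reorient_or_mem_sdiff (hCB : C ⊆ B) {p : V × V} (hp : p ∈ reorient A C) :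
    p ∈ reorient A B ∨ p ∈ B \ C := by
  rcases mem_reorient.1 hp with ⟨hpA, hpC⟩ | hpC
  · by_cases hpB : p ∈ B
    · exact Or.inr ⟨hpB, hpC⟩
    · exact Or.inl (mem_reorient.2 (Or.inl ⟨hpA, hpB⟩))
  · exact Or.inl (mem_reorient.2 (Or.inr (hCB hpC)))

/-- Take `u` maximal among the tails of the arcs of `B \ C` in the order of `E_C`, then `v`
minimal among the heads of those arcs leaving `u`. A path `u → w →⁺ v` in `E_C` would contradict
the choice of `v` if `(u, w) ∈ B \ C`, the choice of `u` if it later used an arc of `B \ C`, and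
the acyclicity of `E_B` otherwise. -/
theorem exists_mem_sdiff_mem_transRed [Finite V] (hB : ARmem A B)
    (hC : AcyclicArcs (reorient A C)) (hCB : C ⊂ B) :
    ∃ a ∈ B \ C, a ∈ transRed (reorient A C) := by
  set R := TransGen (ArcRel (reorient A C))
  have : Std.Irrefl R := ⟨hC⟩
  obtain ⟨⟨u₁, v₁⟩, h₁⟩ := Set.exists_of_ssubset hCB
  obtain ⟨u, ⟨v₂, h₂⟩, hu⟩ := (Finite.wellFounded_of_trans_of_irrefl (swap R)).has_min
    {u | ∃ v, (u, v) ∈ B \ C} ⟨u₁, v₁, h₁⟩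
  obtain ⟨v, huv, hv⟩ := (Finite.wellFounded_of_trans_of_irrefl R).has_min
    {v | (u, v) ∈ B \ C} ⟨v₂, h₂⟩
  refine ⟨(u, v), huv, Or.inl ⟨hB.1 huv.1, huv.2⟩, fun ⟨w, huw, hwv⟩ => ?_⟩
  rcases mem_reorient_or_mem_sdiff hCB.1 huw with huwB | huwBC
  · have hsplit : ∀ x y, ArcRel (reorient A C) x y →
        ArcRel (reorient A B) x y ∨ ∃ z, (x, z) ∈ B \ C :=
      fun x y hxy => (mem_reorient_or_mem_sdiff hCB.1 hxy).imp_right fun h => ⟨y, h⟩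
    rcases hwv.or_exists_reflTransGen hsplit with hwv | ⟨x, hwx, hx⟩
    · exact hB.2 v (TransGen.head (Or.inr ⟨(u, v), huv.1, rfl⟩) (TransGen.head huwB hwv))
    · exact hu x hx (TransGen.head' huw hwx)
  · exact hv w huwBC hwv

end AcyclicReorientations

namespace ARP

variable {A : Set (V × V)}

theorem covBy_iff [Finite V] (hA : IsDAG A) {B C : ARP A} : C ⋖ B ↔ C.1 ⋖ B.1 := by
  refine ⟨fun h => ?_, fun h => h.of_image (OrderEmbedding.subtype _)⟩
  obtain ⟨a, ha, haC⟩ := exists_mem_sdiff_mem_transRed B.2 C.2.2 h.lt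
  let C' : ARP A := ⟨insert a C.1, (C.2.insert_iff hA (B.2.1 ha.1) ha.2).2 haC⟩
  have hC' : C' = B := (h.eq_or_eq (Set.subset_insert _ _) (Set.insert_subset ha.1 h.le)).resolve_left
    fun he => ha.2 (he ▸ Set.mem_insert a C.1)
  rw [← hC']
  exact Set.covBy_insert ha.2

theorem existsUnique_lowerCover_iff [Finite V] (hA : IsDAG A) (B : ARP A) :
    (∃! C : ARP A, C ⋖ B) ↔ ∃! a, a ∈ B.1 ∧ a.swap ∈ transRed (reorient A B.1) := by
  let f : {a // a ∈ B.1 ∧ a.swap ∈ transRed (reorient A B.1)} → {C : ARP A // C ⋖ B} :=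
    fun a => ⟨⟨B.1 \ {a.1}, (B.2.sdiff_singleton_iff hA a.2.1).2 a.2.2⟩,
      (Set.sdiff_singleton_covBy a.2.1).of_image (OrderEmbedding.subtype _)⟩
  refine (Equiv.existsUnique_subtype_congr (Equiv.ofBijective f ⟨fun a b hab => ?_, ?_⟩)).symm
  · have hab : B.1 \ {a.1} = B.1 \ {b.1} := congrArg (fun C => C.1.1) hab
    by_contra hne
    have hmem : a.1 ∈ B.1 \ {b.1} := ⟨a.2.1, fun h => hne (Subtype.ext h)⟩
    exact (hab ▸ hmem).2 rfl
  · rintro ⟨C, hC⟩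
    obtain ⟨a, ha, hC⟩ := ((covBy_iff hA).1 hC).exists_set_sdiff_singleton
    exact ⟨⟨a, ha, (B.2.sdiff_singleton_iff hA ha).1 (hC ▸ C.2)⟩, by ext1; ext1; exact hC⟩

theorem existsUnique_upperCover_iff [Finite V] (hA : IsDAG A) (B : ARP A) :
    (∃! C : ARP A, B ⋖ C) ↔ ∃! a, a ∈ A \ B.1 ∧ a ∈ transRed (reorient A B.1) := by
  let f : {a // a ∈ A \ B.1 ∧ a ∈ transRed (reorient A B.1)} → {C : ARP A // B ⋖ C} :=
    fun a => ⟨⟨insert a.1 B.1, (B.2.insert_iff hA a.2.1.1 a.2.1.2).2 a.2.2⟩,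
      (Set.covBy_insert a.2.1.2).of_image (OrderEmbedding.subtype _)⟩
  refine (Equiv.existsUnique_subtype_congr (Equiv.ofBijective f ⟨fun a b hab => ?_, ?_⟩)).symm
  · exact Subtype.ext ((Set.insert_inj a.2.1.2).1 (congrArg (fun C => C.1.1) hab))
  · rintro ⟨C, hC⟩
    obtain ⟨a, ha, hC⟩ := ((covBy_iff hA).1 hC).exists_set_insert
    have haA : a ∈ A := C.2.1 (hC ▸ Set.mem_insert a B.1)
    exact ⟨⟨a, ⟨haA, ha⟩, (B.2.insert_iff hA haA ha).1 (hC ▸ C.2)⟩, by ext1; ext1; exact hC⟩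

end ARP

end Digraphs

/-- `B` is join (resp. meet) irreducible in `AR(D)` iff exactly
one reversed (resp. unreversed) arc appears in the transitive reduction of `E_B`. -/
theorem stmt_9 {V : Type*} [Fintype V] (A : Set (V × V)) (hA : IsDAG A)
    (B : ARP A) :
    ((∃! C : ARP A, C ⋖ B) ↔
      (∃! a : V × V, a ∈ B.1 ∧ Prod.swap a ∈ transRed (reorient A B.1))) ∧
    ((∃! C : ARP A, B ⋖ C) ↔
      (∃! a : V × V, a ∈ A \ B.1 ∧ a ∈ transRed (reorient A B.1))) :=
  ⟨ARP.existsUnique_lowerCover_iff hA B, ARP.existsUnique_upperCover_iff hA B⟩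
end

section
/- For any directed acyclic graph D = (V, A), the number of join irreducible elements of the acyclic reorientation poset AR(D) is at least |A|, and likewise the number of meet irreducible elements of AR(D) is at least |A|. -/
/-!
Every cover in `AR(D)` un-reverses a single arc: if `C ⊂ B` are acyclic reorientations, then
un-reversing the arc of `B \ C` spanning the fewest vertices of `E_B` keeps it acyclic. Hence an
acyclic reorientation `B` of least size reversing a given arc `a` has `B \ {a}` as its unique
lower cover, and `a ↦ B` is injective. Complementation `B ↦ A \ B` is an order-reversing
involution of `AR(D)`, so it maps join irreducibles injectively to meet irreducibles.
-/

open Relation Set OrderDual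

namespace Relation

variable {α : Type*} {R S T P : α → α → Prop}

theorem ReflTransGen.eq_of_acyclic (hR : ∀ z, ¬ TransGen R z z) {x y : α}
    (hxy : ReflTransGen R x y) (hyx : ReflTransGen R y x) : x = y := by
  rcases reflTransGen_iff_eq_or_transGen.1 hxy with rfl | hxy
  · rfl
  rcases reflTransGen_iff_eq_or_transGen.1 hyx with rfl | hyx
  · rfl
  exact (hR x (hxy.trans hyx)).elim

theorem TransGen.transGen_or_exists (h : ∀ a b, S a b → T a b ∨ P a b) {x y : α}
    (hxy : TransGen S x y) :
    TransGen T x y ∨ ∃ a b, ReflTransGen S x a ∧ P a b ∧ ReflTransGen S b y := by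
  induction hxy with
  | @single b hb =>
    rcases h _ _ hb with hT | hP
    · exact .inl (.single hT)
    · exact .inr ⟨x, b, .refl, hP, .refl⟩
  | @tail b c hxb hbc ih =>
    rcases h _ _ hbc with hT | hP
    · rcases ih with ih | ⟨a, d, hxa, hP, hdb⟩
      · exact .inl (ih.tail hT)
      · exact .inr ⟨a, d, hxa, hP, hdb.tail hbc⟩
    · exact .inr ⟨b, c, hxb.to_reflTransGen, hP, .refl⟩

theorem reflTransGen_of_transGen_adjoin_cycle (hR : ∀ z, ¬ TransGen R z z) {u v c : α}
    (hc : TransGen (fun x y => R x y ∨ x = u ∧ y = v) c c) : ReflTransGen R v u := by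
  by_contra hvu
  have key : ∀ a b, TransGen (fun x y => R x y ∨ x = u ∧ y = v) a b →
      TransGen R a b ∨ ReflTransGen R a u ∧ ReflTransGen R v b := by
    intro a b hab
    induction hab with
    | single h =>
      rcases h with h | ⟨rfl, rfl⟩
      · exact .inl (.single h)
      · exact .inr ⟨.refl, .refl⟩
    | tail _ hbc ih =>
      rcases hbc with hbc | ⟨rfl, rfl⟩
      · exact ih.imp (·.tail hbc) fun h => ⟨h.1, h.2.tail hbc⟩
      · rcases ih with ih | ih
        · exact .inr ⟨ih.to_reflTransGen, .refl⟩
        · exact (hvu ih.2).elim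
  rcases key c c hc with h | ⟨hcu, hvc⟩
  · exact hR c h
  · exact hvu (hvc.trans hcu)

def reachInterval (R : α → α → Prop) (x y : α) : Set α :=
  {w | ReflTransGen R x w ∧ ReflTransGen R w y}

theorem reachInterval_ssubset (hR : ∀ z, ¬ TransGen R z z) {x y x' y' : α}
    (hx : ReflTransGen R x x') (hxy' : ReflTransGen R x' y') (hy : ReflTransGen R y' y)
    (hne : (x', y') ≠ (x, y)) : reachInterval R x' y' ⊂ reachInterval R x y := by
  refine ssubset_iff_subset_ne.2
    ⟨fun w hw => ⟨hx.trans hw.1, hw.2.trans hy⟩, fun heq => hne ?_⟩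
  have hx_mem : x ∈ reachInterval R x' y' := heq ▸ ⟨.refl, hx.trans (hxy'.trans hy)⟩
  have hy_mem : y ∈ reachInterval R x' y' := heq ▸ ⟨hx.trans (hxy'.trans hy), .refl⟩
  rw [ReflTransGen.eq_of_acyclic hR hx hx_mem.1, ReflTransGen.eq_of_acyclic hR hy_mem.2 hy]

end Relation

theorem OrderIso.ncard_setOf_existsUnique_covBy_le {α : Type*} [Preorder α] [Finite α]
    (e : α ≃o αᵒᵈ) : {b : α | ∃! c, c ⋖ b}.ncard ≤ {b : α | ∃! c, b ⋖ c}.ncard := by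
  have hcov : ∀ b c, c ⋖ b ↔ ofDual (e b) ⋖ ofDual (e c) := fun b c => by
    rw [ofDual_covBy_ofDual_iff, apply_covBy_apply_iff]
  refine ncard_le_ncard_of_injOn (fun b => ofDual (e b)) (fun b hb => ?_)
    fun _ _ _ _ h => e.injective h
  exact ((e.toEquiv.trans ofDual).existsUnique_congr (hcov b)).1 hb

section Reorientation

variable {V : Type*} {A B C : Set (V × V)}

theorem arcRel_reorient {x y : V} :
    ArcRel (reorient A B) x y ↔ (x, y) ∈ A ∧ (x, y) ∉ B ∨ (y, x) ∈ B := by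
  simp [ArcRel, reorient]

theorem AcyclicArcs.image_swap (hE : AcyclicArcs A) : AcyclicArcs (Prod.swap '' A) := by
  intro v hv
  refine hE v (transGen_swap.1 (TransGen.mono (fun x y h => ?_) _ _ hv))
  simpa [ArcRel] using h

theorem ARmem_empty (hA : AcyclicArcs A) : ARmem A ∅ :=
  ⟨empty_subset A, by simpa [reorient] using hA⟩

theorem ARmem.sdiff (hB : ARmem A B) : ARmem A (A \ B) := by
  refine ⟨sdiff_subset, ?_⟩
  have : reorient A (A \ B) = Prod.swap '' reorient A B := by
    simp only [reorient, sdiff_sdiff_cancel_left hB.1, image_union, image_image, Prod.swap_swap,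
      image_id', union_comm]
  simpa [this] using hB.2.image_swap

theorem ARmem_self (hA : AcyclicArcs A) : ARmem A A := by
  simpa using (ARmem_empty hA).sdiff

theorem arcRel_reorient_sdiff_singleton (hA : ∀ a ∈ A, a.swap ∉ A) {u v x y : V}
    (huv : (u, v) ∈ B) (hBA : B ⊆ A) (hxy : ArcRel (reorient A (B \ {(u, v)})) x y) :
    (ArcRel (reorient A B) x y ∧ (x, y) ≠ (v, u)) ∨ x = u ∧ y = v := by
  have hvu : (v, u) ∉ A := hA _ (hBA huv)
  rw [arcRel_reorient] at hxy ⊢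
  by_cases hxy_uv : x = u ∧ y = v
  · exact .inr hxy_uv
  refine .inl ⟨?_, ?_⟩
  · simp only [mem_sdiff, mem_singleton_iff, Prod.mk.injEq, not_and] at hxy
    tauto
  · rintro ⟨rfl, rfl⟩
    simp_all

def ARP.complIso (A : Set (V × V)) : ARP A ≃o (ARP A)ᵒᵈ where
  toFun B := toDual ⟨A \ B.1, B.2.sdiff⟩
  invFun B := ⟨A \ (ofDual B).1, (ofDual B).2.sdiff⟩
  left_inv B := Subtype.ext (sdiff_sdiff_cancel_left B.2.1)
  right_inv B := Subtype.ext (sdiff_sdiff_cancel_left (ofDual B).2.1)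
  map_rel_iff' {B C} := sdiff_subset_sdiff_iff_subset C.2.1 B.2.1

variable [Finite V]

theorem ARmem.exists_sdiff_singleton (hA : ∀ a ∈ A, a.swap ∉ A) (hB : ARmem A B)
    (hC : ARmem A C) (hCB : C ⊂ B) : ∃ a ∈ B \ C, ARmem A (B \ {a}) := by
  set R := ArcRel (reorient A B)
  -- Un-reverse an arc `(u, v)` of `B \ C` spanning the fewest vertices of `E_B`: a new cycle
  -- would give a path `v → u` avoiding `(v, u)`, which either lies in `E_C` or crosses a
  -- reversed arc of `B \ C` spanning fewer vertices.
  obtain ⟨⟨u, v⟩, huv, hmin⟩ := exists_min_image (B \ C)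
    (fun a => (reachInterval R a.2 a.1).ncard) (toFinite _) (nonempty_of_ssubset hCB)
  refine ⟨(u, v), huv, ⟨fun a ha => hB.1 ha.1, fun c hc => ?_⟩⟩
  set S : V → V → Prop := fun x y => R x y ∧ (x, y) ≠ (v, u)
  have hS : ∀ z, ¬ TransGen S z z := fun z hz =>
    hB.2 z (TransGen.mono (fun _ _ h => h.1) _ _ hz)
  have hRvu : R v u := arcRel_reorient.2 (.inr huv.1)
  have hvu : TransGen S v u := by
    have := reflTransGen_of_transGen_adjoin_cycle hS
      (TransGen.mono (fun x y h => arcRel_reorient_sdiff_singleton hA huv.1 hB.1 h) _ _ hc)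
    refine (reflTransGen_iff_eq_or_transGen.1 this).resolve_left ?_
    rintro rfl
    exact hB.2 u (.single hRvu)
  have hsplit : ∀ p q, S p q →
      ArcRel (reorient A C) p q ∨ ((q, p) ∈ B \ C ∧ (p, q) ≠ (v, u)) := by
    rintro p q ⟨hpq, hne⟩
    replace hpq := arcRel_reorient.1 hpq
    rw [arcRel_reorient]
    by_cases hqpC : (q, p) ∈ C
    · exact .inl (.inr hqpC)
    rcases hpq with hpq | hqp
    · exact .inl (.inl ⟨hpq.1, fun h => hpq.2 (hCB.1 h)⟩)
    · exact .inr ⟨⟨hqp, hqpC⟩, hne⟩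
  rcases hvu.transGen_or_exists hsplit with hvuC | ⟨p, q, hvp, ⟨hqp, hne⟩, hqu⟩
  · have huvC : ArcRel (reorient A C) u v := arcRel_reorient.2 (.inl ⟨hB.1 huv.1, huv.2⟩)
    exact hC.2 u (.head huvC hvuC)
  · have hsub : reachInterval R p q ⊂ reachInterval R v u :=
      reachInterval_ssubset hB.2 (ReflTransGen.mono (fun _ _ h => h.1) _ _ hvp)
        (.single (arcRel_reorient.2 (.inr hqp.1)))
        (ReflTransGen.mono (fun _ _ h => h.1) _ _ hqu) hne
    exact (ncard_lt_ncard hsub).not_ge (hmin _ hqp)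

theorem ARP.covBy_iff_s10 (hA : ∀ a ∈ A, a.swap ∉ A) {B C : ARP A} :
    C ⋖ B ↔ ∃ a ∈ B.1, C.1 = B.1 \ {a} := by
  constructor
  · intro hCB
    obtain ⟨a, ha, hBa⟩ := B.2.exists_sdiff_singleton hA C.2 hCB.lt
    have hCD : C ≤ ⟨B.1 \ {a}, hBa⟩ := fun x hx => ⟨hCB.le hx, fun hxa => ha.2 (hxa ▸ hx)⟩
    have hDB : (⟨B.1 \ {a}, hBa⟩ : ARP A) ≤ B := sdiff_subset
    refine ⟨a, ha.1, ?_⟩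
    rcases hCB.eq_or_eq hCD hDB with h | h
    · exact congrArg Subtype.val h.symm
    · have haB : a ∈ B.1 \ {a} := by rw [← h] at ha; exact ha.1
      exact absurd rfl haB.2
  · rintro ⟨a, ha, hC⟩
    refine CovBy.of_image (OrderEmbedding.subtype _) ?_
    change C.1 ⋖ B.1
    rw [hC]
    exact sdiff_singleton_covBy ha

/-- The witness `B` is an acyclic reorientation of least size reversing `a`. -/
theorem exists_covBy_iff_eq_sdiff_singleton (hA : IsDAG A) {a : V × V} (ha : a ∈ A) :
    ∃ B C : ARP A, a ∈ B.1 ∧ C.1 = B.1 \ {a} ∧ ∀ D, D ⋖ B ↔ D = C := by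
  obtain ⟨B, ⟨hB, haB⟩, hmin⟩ := exists_min_image {B | ARmem A B ∧ a ∈ B} ncard
    ((toFinite _).subset fun _ => id) ⟨A, ARmem_self hA.2.2, ha⟩
  have honly : ∀ b ∈ B, ARmem A (B \ {b}) → b = a := by
    intro b hb hBb
    by_contra hba
    exact (ncard_sdiff_singleton_lt_of_mem hb).not_ge (hmin _ ⟨hBb, haB, Ne.symm hba⟩)
  obtain ⟨b, hb, hBb⟩ := hB.exists_sdiff_singleton hA.2.1 (ARmem_empty hA.2.2)
    (empty_ssubset.2 ⟨a, haB⟩)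
  obtain rfl := honly b hb.1 hBb
  refine ⟨⟨B, hB⟩, ⟨B \ {b}, hBb⟩, haB, rfl, fun D => ?_⟩
  rw [ARP.covBy_iff_s10 hA.2.1]
  constructor
  · rintro ⟨c, hc, hD⟩
    obtain rfl := honly c hc (hD ▸ D.2)
    exact Subtype.ext hD
  · rintro rfl
    exact ⟨b, haB, rfl⟩

theorem ncard_le_ncard_joinIrreducible (hA : IsDAG A) :
    A.ncard ≤ {B : ARP A | ∃! C : ARP A, C ⋖ B}.ncard := by
  have : Nonempty (ARP A) := ⟨⟨∅, ARmem_empty hA.2.2⟩⟩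
  choose! F G hmem hG hcov using fun a (ha : a ∈ A) ↦ exists_covBy_iff_eq_sdiff_singleton hA ha
  refine ncard_le_ncard_of_injOn F (fun a ha => ⟨G a, (hcov a ha _).2 rfl,
    fun D => (hcov a ha D).1⟩) fun a ha b hb hab => ?_
  have hGab : G a = G b := (hcov b hb _).1 (hab ▸ (hcov a ha _).2 rfl)
  have hsdiff : (F a).1 \ {a} = (F a).1 \ {b} := by rw [← hG a ha, hGab, hG b hb, hab]
  by_contra hne
  exact ((Set.ext_iff.1 hsdiff a).2 ⟨hmem a ha, hne⟩).2 rfl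

end Reorientation

/-- The acyclic reorientation poset has at least `|A|` join
irreducible elements and at least `|A|` meet irreducible elements. -/
theorem stmt_10 {V : Type*} [Fintype V] (A : Set (V × V)) (hA : IsDAG A) :
    A.ncard ≤ {B : ARP A | ∃! C : ARP A, C ⋖ B}.ncard ∧
    A.ncard ≤ {B : ARP A | ∃! C : ARP A, B ⋖ C}.ncard :=
  have hJ := ncard_le_ncard_joinIrreducible hA
  ⟨hJ, hJ.trans (ARP.complIso A).ncard_setOf_existsUnique_covBy_le⟩
end
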